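/- The function d(ℓ) = sqrt(1 + log 2 − 2ℓ − sqrt(1 − 4ℓ²) + log ℓ + (1/2) log((1 + sqrt(1 − 4ℓ²))/(1 − sqrt(1 − 4ℓ²)))) satisfies d(ℓ) → 0 as ℓ → 1/2⁻, and the expression under the square root is nonnegative for ℓ ∈ (0, 1/2). -/

import Mathlib

open Real MeasureTheory Filter

/- With `s = √(1 - 4ℓ²)` one has `(2ℓ)² = (1 + s)(1 - s)`, so the logarithmic terms collapse
and `cardioidSqDist ℓ = 1 - 2ℓ - s + log (1 + s)`. Since `2ℓ = √(1 - s²) ≤ 1 - s²/2`, this is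
at least `log (1 + s) - s + s²/2 ≥ 0`. The limit is continuity at `ℓ = 1/2`, where `s = 0` and
the value is `0`. -/

/-- Squared distance of the cardioid model with concentration `ℓ` from the base model
at `ℓ₀ → 1/2`. -/
noncomputable def cardioidSqDist (ℓ : ℝ) : ℝ :=
  1 + Real.log 2 - 2 * ℓ - Real.sqrt (1 - 4 * ℓ^2) + Real.log ℓ
    + (1/2) * Real.log ((1 + Real.sqrt (1 - 4 * ℓ^2)) / (1 - Real.sqrt (1 - 4 * ℓ^2)))

lemma sub_sq_div_two_le_log_one_add {s : ℝ} (hs : 0 ≤ s) : s - s ^ 2 / 2 ≤ log (1 + s) := by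
  refine le_trans ?_ (le_log_one_add_of_nonneg hs)
  rw [le_div_iff₀ (by linarith)]
  nlinarith [pow_nonneg hs 3]

lemma cardioidSqDist_eq {ℓ : ℝ} (hℓ : 0 < ℓ) (hℓ' : 4 * ℓ ^ 2 ≤ 1) :
    cardioidSqDist ℓ = 1 - 2 * ℓ - √(1 - 4 * ℓ ^ 2) + log (1 + √(1 - 4 * ℓ ^ 2)) := by
  set s := √(1 - 4 * ℓ ^ 2) with hs
  have hs0 : 0 ≤ s := sqrt_nonneg _
  have hs_sq : s ^ 2 = 1 - 4 * ℓ ^ 2 := sq_sqrt (by linarith)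
  have hs1 : s < 1 := by nlinarith
  have hlog_sq : log ((2 * ℓ) ^ 2) = log ((1 + s) * (1 - s)) := by
    congr 1
    nlinarith
  rw [log_pow, log_mul two_ne_zero hℓ.ne', log_mul (by linarith) (by linarith)] at hlog_sq
  push_cast at hlog_sq
  unfold cardioidSqDist
  rw [← hs, log_div (by linarith) (by linarith)]
  linarith

lemma cardioidSqDist_nonneg {ℓ : ℝ} (hℓ : 0 < ℓ) (hℓ' : 4 * ℓ ^ 2 ≤ 1) :
    0 ≤ cardioidSqDist ℓ := by
  rw [cardioidSqDist_eq hℓ hℓ']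
  set s := √(1 - 4 * ℓ ^ 2)
  have hs_sq : s ^ 2 = 1 - 4 * ℓ ^ 2 := sq_sqrt (by linarith)
  have htwo_mul_le : 2 * ℓ ≤ 1 - s ^ 2 / 2 := by nlinarith
  linarith [sub_sq_div_two_le_log_one_add (sqrt_nonneg (1 - 4 * ℓ ^ 2))]

lemma cardioidSqDist_half : cardioidSqDist (1 / 2) = 0 := by
  rw [cardioidSqDist_eq (by norm_num) (by norm_num)]
  norm_num

lemma continuousAt_cardioidSqDist_half : ContinuousAt cardioidSqDist (1 / 2) := by
  unfold cardioidSqDist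
  fun_prop (disch := norm_num)

theorem cardioid_distance_boundary :
    Tendsto (fun ℓ => Real.sqrt (cardioidSqDist ℓ))
      (nhdsWithin (1/2 : ℝ) (Set.Iio (1/2))) (nhds 0) ∧
    ∀ ℓ ∈ Set.Ioo (0:ℝ) (1/2), 0 ≤ cardioidSqDist ℓ := by
  refine ⟨?_, fun ℓ ⟨hℓ, hℓ'⟩ => cardioidSqDist_nonneg hℓ (by nlinarith)⟩
  have hsqrt :
      Tendsto (fun ℓ => √(cardioidSqDist ℓ)) (nhds (1 / 2)) (nhds √(cardioidSqDist (1 / 2))) :=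
    (continuous_sqrt.continuousAt.comp continuousAt_cardioidSqDist_half).tendsto
  rw [cardioidSqDist_half, sqrt_zero] at hsqrt
  exact hsqrt.mono_left nhdsWithin_le_nhds
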